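/- For any positive integer r and any number of variables k, the sum over all partitions λ of r of z_λ^{-1} · p_λ(x_1,…,x_k) equals the complete homogeneous symmetric polynomial h_r(x_1,…,x_k), where z_λ = ∏_i i^{m_i(λ)} m_i(λ)! and p_λ is the power-sum symmetric polynomial associated to λ. -/

import Mathlib

open Finset

/-- `z_λ = ∏_i i^{m_i(λ)} m_i(λ)!` where `m_i(λ)` is the number of parts of `λ` equal to `i`. -/
noncomputable def zPart {r : ℕ} (lam : Nat.Partition r) : ℕ :=
  ∏ i ∈ Finset.Icc 1 r, i ^ (Multiset.count i lam.parts) * (Multiset.count i lam.parts).factorial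

/-- The power-sum symmetric polynomial `p_λ` evaluated at `w : Fin k → ℂ`. -/
noncomputable def pPart {r : ℕ} (lam : Nat.Partition r) {k : ℕ} (w : Fin k → ℂ) : ℂ :=
  (lam.parts.map (fun j => ∑ i, w i ^ j)).prod

/-- The complete homogeneous symmetric polynomial `h_r` evaluated at `w : Fin k → ℂ`,
as the sum of all monomials of degree `r`, i.e. a sum over multisets of size `r`. -/
noncomputable def hPoly (r : ℕ) {k : ℕ} (w : Fin k → ℂ) : ℂ :=
  ∑ m ∈ (Finset.univ : Finset (Fin k)).sym r, ((m : Multiset (Fin k)).map w).prod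


/-!
Both sides satisfy Newton's recursion `n a_n = ∑_{j=1}^n p_j a_{n-j}` with `a_0 = 1`, where
`p_j` is the `j`-th power sum, and in characteristic zero this recursion determines `a`.
For `h_n`: a monomial of degree `n` in which `x_i` has multiplicity `m_i` is `x_i^j` times a
monomial of degree `n - j` for exactly `m_i` values of `j ≥ 1`, and `∑_i m_i = n`.
For the partition sum: removing one part `j` from `λ ⊢ n` leaves `μ ⊢ n - j` with
`z_λ = j · m_j(λ) · z_μ`, and `∑_j j · m_j(λ) = n`.
-/

variable {R : Type*}

def NewtonRecursion [Semiring R] (p a : ℕ → R) : Prop :=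
  ∀ n : ℕ, (n : R) * a n = ∑ j ∈ Icc 1 n, p j * a (n - j)

theorem NewtonRecursion.eq [Semiring R] [IsLeftCancelMulZero R] [CharZero R] {p a b : ℕ → R}
    (ha : NewtonRecursion p a) (hb : NewtonRecursion p b) (h0 : a 0 = b 0) : a = b := by
  funext n
  induction n using Nat.strong_induction_on with
  | _ n ih =>
    rcases Nat.eq_zero_or_pos n with rfl | hn
    · exact h0
    · refine mul_left_cancel₀ (Nat.cast_ne_zero.mpr hn.ne') ?_
      rw [ha, hb]
      exact sum_congr rfl fun j hj => by rw [ih (n - j) (by grind)]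

section CompleteHomogeneous

variable {α : Type*} [Fintype α] [DecidableEq α]

variable (α) in
def multisetsOfCard (n : ℕ) : Finset (Multiset α) :=
  ((univ : Finset α).sym n).map ⟨(↑), Sym.coe_injective⟩

theorem mem_multisetsOfCard {n : ℕ} {M : Multiset α} :
    M ∈ multisetsOfCard α n ↔ Multiset.card M = n := by
  simp only [multisetsOfCard, mem_map, mem_sym_iff, mem_univ, implies_true, true_and,
    Function.Embedding.coeFn_mk]
  exact ⟨fun ⟨m, hm⟩ => hm ▸ m.2, fun h => ⟨⟨M, h⟩, rfl⟩⟩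

def completeHomogeneous [CommSemiring R] (n : ℕ) (w : α → R) : R :=
  ∑ M ∈ multisetsOfCard α n, (M.map w).prod

def powerSum [Semiring R] (w : α → R) (j : ℕ) : R :=
  ∑ i, w i ^ j

theorem filter_le_count_multisetsOfCard {i : α} {j n : ℕ} (hj : j ≤ n) :
    {M ∈ multisetsOfCard α n | j ≤ M.count i} =
      (multisetsOfCard α (n - j)).map (addLeftEmbedding (Multiset.replicate j i)) := by
  ext M
  simp only [mem_filter, mem_map, mem_multisetsOfCard, addLeftEmbedding_apply]
  constructor
  · rintro ⟨hM, hji⟩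
    have hle := Multiset.le_count_iff_replicate_le.mp hji
    refine ⟨M - Multiset.replicate j i, ?_, add_tsub_cancel_of_le hle⟩
    rw [Multiset.card_sub hle, Multiset.card_replicate, hM]
  · rintro ⟨m, hm, rfl⟩
    simp [hm, hj]

variable [CommSemiring R]

theorem sum_le_count_prod_map (w : α → R) (i : α) {j n : ℕ} (hj : j ≤ n) :
    ∑ M ∈ multisetsOfCard α n with j ≤ M.count i, (M.map w).prod =
      w i ^ j * completeHomogeneous (n - j) w := by
  rw [filter_le_count_multisetsOfCard hj, sum_map, completeHomogeneous, mul_sum]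
  simp [Multiset.map_add, Multiset.prod_add, Multiset.map_replicate]

theorem sum_count_mul_prod_map (w : α → R) (i : α) (n : ℕ) :
    ∑ M ∈ multisetsOfCard α n, (M.count i : R) * (M.map w).prod =
      ∑ j ∈ Icc 1 n, w i ^ j * completeHomogeneous (n - j) w := by
  have hcount {M} (hM : M ∈ multisetsOfCard α n) :
      {j ∈ Icc 1 n | j ≤ M.count i} = Icc 1 (M.count i) := by
    have := (Multiset.count_le_card i M).trans_eq (mem_multisetsOfCard.mp hM)
    ext j; simp only [mem_filter, mem_Icc]; omega
  calc ∑ M ∈ multisetsOfCard α n, (M.count i : R) * (M.map w).prod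
      = ∑ M ∈ multisetsOfCard α n, ∑ j ∈ Icc 1 n with j ≤ M.count i, (M.map w).prod := by
        refine sum_congr rfl fun M hM => ?_
        rw [sum_const, hcount hM, Nat.card_Icc, Nat.add_sub_cancel, nsmul_eq_mul]
    _ = ∑ j ∈ Icc 1 n, ∑ M ∈ multisetsOfCard α n with j ≤ M.count i, (M.map w).prod := by
        simp only [sum_filter]
        exact sum_comm
    _ = ∑ j ∈ Icc 1 n, w i ^ j * completeHomogeneous (n - j) w :=
        sum_congr rfl fun j hj => sum_le_count_prod_map w i (mem_Icc.mp hj).2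

theorem newtonRecursion_completeHomogeneous (w : α → R) :
    NewtonRecursion (powerSum w) (completeHomogeneous · w) := by
  intro n
  calc (n : R) * completeHomogeneous n w
      = ∑ M ∈ multisetsOfCard α n, ∑ i, (M.count i : R) * (M.map w).prod := by
        rw [completeHomogeneous, mul_sum]
        refine sum_congr rfl fun M hM => ?_
        rw [← sum_mul, ← Nat.cast_sum, Multiset.sum_count_eq_card (by simp),
          mem_multisetsOfCard.mp hM]
    _ = ∑ j ∈ Icc 1 n, powerSum w j * completeHomogeneous (n - j) w := by
        simp only [sum_comm (s := multisetsOfCard α n), sum_count_mul_prod_map, powerSum, sum_mul]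
        exact sum_comm

theorem completeHomogeneous_zero (w : α → R) : completeHomogeneous 0 w = 1 := by
  have : multisetsOfCard α 0 = {0} := by ext; simp [mem_multisetsOfCard]
  simp [completeHomogeneous, this]

end CompleteHomogeneous

section PartitionSum

theorem zPart_eq_prod_of_subset {n : ℕ} (μ : n.Partition) {S : Finset ℕ}
    (hS : μ.parts.toFinset ⊆ S) :
    zPart μ = ∏ i ∈ S, i ^ μ.parts.count i * (μ.parts.count i).factorial := by
  have hsupp : μ.parts.toFinset ⊆ Icc 1 n := fun i hi => by
    rw [Multiset.mem_toFinset] at hi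
    exact mem_Icc.mpr ⟨μ.parts_pos hi, μ.le_of_mem_parts hi⟩
  have hsupport (T : Finset ℕ) (hT : μ.parts.toFinset ⊆ T) :
      ∏ i ∈ T, i ^ μ.parts.count i * (μ.parts.count i).factorial =
        ∏ i ∈ μ.parts.toFinset, i ^ μ.parts.count i * (μ.parts.count i).factorial :=
    (prod_subset hT fun i _ hi => by
      rw [Multiset.count_eq_zero_of_notMem (by simpa using hi)]; rfl).symm
  rw [zPart, hsupport _ hsupp, hsupport _ hS]

theorem zPart_eq_of_parts_eq_cons {n m j : ℕ} {μ : n.Partition} {ν : m.Partition}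
    (h : μ.parts = j ::ₘ ν.parts) :
    zPart μ = j * (ν.parts.count j + 1) * zPart ν := by
  have hj : j ∈ μ.parts := h ▸ Multiset.mem_cons_self j _
  have hsub : ν.parts.toFinset ⊆ μ.parts.toFinset :=
    Multiset.toFinset_subset.mpr (h ▸ Multiset.subset_cons _ _)
  rw [zPart_eq_prod_of_subset μ subset_rfl, zPart_eq_prod_of_subset ν hsub,
    ← mul_prod_erase _ _ (Multiset.mem_toFinset.mpr hj),
    ← mul_prod_erase _ _ (Multiset.mem_toFinset.mpr hj),
    prod_congr rfl fun i hi => by rw [h, Multiset.count_cons_of_ne (ne_of_mem_erase hi)],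
    h, Multiset.count_cons_self, pow_succ, Nat.factorial_succ]
  ring

theorem zPart_ne_zero {n : ℕ} (μ : n.Partition) : zPart μ ≠ 0 :=
  prod_ne_zero_iff.mpr fun i hi =>
    mul_ne_zero (pow_ne_zero _ (by grind)) (Nat.factorial_ne_zero _)

variable {K : Type*} [Field K]

noncomputable def partitionSum (p : ℕ → K) (n : ℕ) : K :=
  ∑ μ : n.Partition, (zPart μ : K)⁻¹ * (μ.parts.map p).prod

theorem count_mul_zPart_inv_mul_prod_of_parts_eq_cons [CharZero K] (p : ℕ → K) {n m j : ℕ}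
    {μ : n.Partition} {ν : m.Partition} (hj : 0 < j) (h : μ.parts = j ::ₘ ν.parts) :
    (μ.parts.count j * j : K) * ((zPart μ : K)⁻¹ * (μ.parts.map p).prod) =
      p j * ((zPart ν : K)⁻¹ * (ν.parts.map p).prod) := by
  have hν : (zPart ν : K) ≠ 0 := Nat.cast_ne_zero.mpr (zPart_ne_zero ν)
  have hj' : (j : K) ≠ 0 := Nat.cast_ne_zero.mpr hj.ne'
  rw [zPart_eq_of_parts_eq_cons h, h, Multiset.count_cons_self, Multiset.map_cons,
    Multiset.prod_cons]
  push_cast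
  field_simp

theorem newtonRecursion_partitionSum [CharZero K] (p : ℕ → K) :
    NewtonRecursion p (partitionSum p) := by
  intro n
  calc (n : K) * partitionSum p n
      = ∑ μ : n.Partition, ∑ j ∈ μ.parts.toFinset,
          (μ.parts.count j * j : K) * ((zPart μ : K)⁻¹ * (μ.parts.map p).prod) := by
        rw [partitionSum, mul_sum]
        refine sum_congr rfl fun μ _ => ?_
        have hsum : ∑ j ∈ μ.parts.toFinset, μ.parts.count j * j = n := by
          simpa using (sum_multiset_count μ.parts).symm.trans μ.parts_sum
        rw [← sum_mul]
        congr 1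
        exact_mod_cast hsum.symm
    _ = ∑ j ∈ Icc 1 n, ∑ μ : n.Partition with j ∈ μ.parts,
          (μ.parts.count j * j : K) * ((zPart μ : K)⁻¹ * (μ.parts.map p).prod) :=
        sum_comm' fun μ j => by
          simp only [mem_univ, Multiset.mem_toFinset, true_and, mem_filter, mem_Icc]
          exact ⟨fun hj => ⟨hj, μ.parts_pos hj, μ.le_of_mem_parts hj⟩, fun h => h.1⟩
    _ = ∑ j ∈ Icc 1 n, p j * partitionSum p (n - j) := by
        refine sum_congr rfl fun j hj => ?_
        obtain ⟨hj1, hjn⟩ := mem_Icc.mp hj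
        rw [sum_subtype _ (p := fun μ : n.Partition => j ∈ μ.parts) (fun μ => by simp),
          partitionSum, mul_sum, ← (Nat.Partition.partitionWithPartEquiv hj1 hjn).symm.sum_comp]
        exact sum_congr rfl fun ν _ => count_mul_zPart_inv_mul_prod_of_parts_eq_cons p hj1
          (Nat.Partition.partitionWithPartEquiv_symm_apply_parts hj1 hjn ν)

theorem partitionSum_zero (p : ℕ → K) : partitionSum p 0 = 1 := by
  simp [partitionSum, zPart]

end PartitionSum

theorem sum_partitions_zinv_psum_eq_hsymm_general (r : ℕ) (k : ℕ) (w : Fin k → ℂ) :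
    ∑ lam : Nat.Partition r, ((zPart lam : ℂ))⁻¹ * pPart lam w = hPoly r w := by
  have hh : hPoly r w = completeHomogeneous r w := by
    rw [completeHomogeneous, multisetsOfCard, sum_map]; rfl
  have hp : ∑ lam : Nat.Partition r, ((zPart lam : ℂ))⁻¹ * pPart lam w =
      partitionSum (powerSum w) r := rfl
  have h0 : partitionSum (powerSum w) 0 = completeHomogeneous 0 w := by
    rw [partitionSum_zero, completeHomogeneous_zero]
  rw [hh, hp]
  exact congrFun
    ((newtonRecursion_partitionSum _).eq (newtonRecursion_completeHomogeneous w) h0) r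

/-- For any positive integer `r` and number of variables `k`,
`∑_{λ ⊢ r} z_λ⁻¹ · p_λ(x) = h_r(x)`. -/
theorem sum_partitions_zinv_psum_eq_hsymm (r : ℕ) (hr : 0 < r) (k : ℕ) (w : Fin k → ℂ) :
    ∑ lam : Nat.Partition r, ((zPart lam : ℂ))⁻¹ * pPart lam w = hPoly r w :=
  sum_partitions_zinv_psum_eq_hsymm_general r k w
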